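/- (Proposition 1) Let D > 0, r_r > 0, r_0 > r_r, k_1 > 0, α = k_1/D + 1/r_r and N_tx ∈ ℕ. Define for T > 0 the cumulative adsorbed fraction of the partial adsorption receiver R_PA(T) = ((r_r α − 1)/(r_0 α)) · (1 + erf((r_r − r_0)/√(4DT)) − exp((r_0 − r_r)α + D T α²) · erfc((r_0 − r_r + 2Dα T)/√(4DT))). Then N_tx·R_PA(T) → N_tx · k_1 r_r² / (r_0 (k_1 r_r + D)) as T → ∞. -/

import Mathlib

open Filter

/-- The error function `erf(x) = (2/√π) ∫₀^x e^{−u²} du`. -/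
noncomputable def erf (x : ℝ) : ℝ :=
  (2 / Real.sqrt Real.pi) * ∫ u in (0 : ℝ)..x, Real.exp (-u ^ 2)

/-- The complementary error function `erfc(x) = 1 − erf(x)`. -/
noncomputable def erfc (x : ℝ) : ℝ := 1 - erf x

/-- Cumulative adsorbed fraction of the partial adsorption receiver. -/
noncomputable def Rpa (D rr r0 α : ℝ) (T : ℝ) : ℝ :=
  ((rr * α - 1) / (r0 * α)) *
    (1 + erf ((rr - r0) / Real.sqrt (4 * D * T)) -
      Real.exp ((r0 - rr) * α + D * T * α ^ 2) *
        erfc ((r0 - rr + 2 * D * α * T) / Real.sqrt (4 * D * T)))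

/-!
In terms of the diffusion length `s = √(DT)` the adsorbed fraction is
`K (1 + erf(-c/2s) - exp(cα + α²s²) erfc(c/2s + αs))` with `c = r₀ - r_r ≥ 0` and
`K = (r_r α - 1)/(r₀ α)`. As `s → ∞` the `erf` term tends to `erf 0 = 0`. With
`y = c/2s + αs` one has `cα + α²s² ≤ y²`, so the last term lies between `0` and
`exp(y²) erfc(y)`, which the Gaussian tail bound `erfc y ≤ exp(-y²)/(y√π)` sends to `0`.
Hence `R_PA(T) → K`, and `K = k₁ r_r² / (r₀ (k₁ r_r + D))` for `α = k₁/D + 1/r_r`.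
-/

open MeasureTheory Set Real

lemma integrable_exp_neg_sq : Integrable (fun u : ℝ => exp (-u ^ 2)) := by
  simpa using integrable_exp_neg_mul_sq (b := 1) one_pos

lemma integrable_mul_exp_neg_sq : Integrable (fun u : ℝ => u * exp (-u ^ 2)) := by
  simpa using integrable_mul_exp_neg_mul_sq (b := 1) one_pos

lemma integral_Ioi_mul_exp_neg_sq (x : ℝ) :
    ∫ u in Ioi x, u * exp (-u ^ 2) = exp (-x ^ 2) / 2 := by
  have hderiv :
      ∀ u ∈ Ici x, HasDerivAt (fun u : ℝ => -exp (-u ^ 2) / 2) (u * exp (-u ^ 2)) u :=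
    fun u _ => (((hasDerivAt_pow 2 u).neg.exp).neg.div_const 2).congr_deriv <| by
      simp only [Pi.neg_apply]
      ring
  have hlim : Tendsto (fun u : ℝ => -exp (-u ^ 2) / 2) atTop (nhds 0) := by
    simpa using ((tendsto_exp_neg_atTop_nhds_zero.comp
      (tendsto_pow_atTop two_ne_zero)).neg).div_const 2
  rw [integral_Ioi_of_hasDerivAt_of_tendsto' hderiv integrable_mul_exp_neg_sq.integrableOn hlim]
  ring

lemma erfc_eq_integral_Ioi (x : ℝ) : erfc x = 2 / √π * ∫ u in Ioi x, exp (-u ^ 2) := by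
  have hπ : √π ≠ 0 := by positivity
  have hhalf : ∫ u in Ioi (0 : ℝ), exp (-u ^ 2) = √π / 2 := by
    simpa using integral_gaussian_Ioi 1
  rw [erfc, erf, ← intervalIntegral.integral_Ioi_sub_Ioi' integrable_exp_neg_sq.integrableOn
    integrable_exp_neg_sq.integrableOn, hhalf]
  field_simp
  ring

lemma erfc_nonneg (x : ℝ) : 0 ≤ erfc x := by
  rw [erfc_eq_integral_Ioi]
  have : 0 ≤ ∫ u in Ioi x, exp (-u ^ 2) :=
    setIntegral_nonneg measurableSet_Ioi fun u _ => (exp_pos _).le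
  positivity

lemma erfc_le_exp_neg_sq_div {x : ℝ} (hx : 0 < x) : erfc x ≤ exp (-x ^ 2) / (x * √π) := by
  have hmono : ∫ u in Ioi x, exp (-u ^ 2) ≤ ∫ u in Ioi x, x⁻¹ * (u * exp (-u ^ 2)) := by
    refine setIntegral_mono_on integrable_exp_neg_sq.integrableOn
      (integrable_mul_exp_neg_sq.const_mul _).integrableOn measurableSet_Ioi fun u hu => ?_
    have h1 : 1 ≤ x⁻¹ * u := by
      rw [← div_eq_inv_mul, le_div_iff₀ hx]
      linarith [mem_Ioi.mp hu]
    nlinarith [exp_pos (-u ^ 2)]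
  rw [integral_const_mul, integral_Ioi_mul_exp_neg_sq] at hmono
  calc erfc x = 2 / √π * ∫ u in Ioi x, exp (-u ^ 2) := erfc_eq_integral_Ioi x
    _ ≤ 2 / √π * (x⁻¹ * (exp (-x ^ 2) / 2)) := by gcongr
    _ = exp (-x ^ 2) / (x * √π) := by field_simp

lemma tendsto_exp_sq_mul_erfc_atTop :
    Tendsto (fun x : ℝ => exp (x ^ 2) * erfc x) atTop (nhds 0) := by
  refine squeeze_zero' (g := fun x : ℝ => (x * √π)⁻¹)
    (Eventually.of_forall fun x => mul_nonneg (exp_pos _).le (erfc_nonneg x)) ?_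
    (tendsto_id.atTop_mul_const (by positivity)).inv_tendsto_atTop
  filter_upwards [eventually_gt_atTop 0] with x hx
  calc exp (x ^ 2) * erfc x ≤ exp (x ^ 2) * (exp (-x ^ 2) / (x * √π)) := by
        gcongr
        exact erfc_le_exp_neg_sq_div hx
    _ = (x * √π)⁻¹ := by rw [mul_div_assoc', ← exp_add]; simp

lemma continuous_erf : Continuous erf :=
  continuous_const.mul
    (intervalIntegral.continuous_primitive (fun _ _ => integrable_exp_neg_sq.intervalIntegrable) 0)

lemma erf_zero : erf 0 = 0 := by simp [erf]

lemma tendsto_erf_div_atTop {ι : Type*} {l : Filter ι} {f : ι → ℝ} (b : ℝ)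
    (hf : Tendsto f l atTop) : Tendsto (fun i => erf (b / f i)) l (nhds 0) := by
  simpa [erf_zero, Function.comp_def] using
    (continuous_erf.tendsto 0).comp (tendsto_const_nhds.div_atTop hf)

lemma tendsto_exp_mul_erfc_add_atTop {c a : ℝ} (hc : 0 ≤ c) (ha : 0 < a) :
    Tendsto (fun s : ℝ => exp (c * a + a ^ 2 * s ^ 2) * erfc (c / (2 * s) + a * s))
      atTop (nhds 0) := by
  have hy : Tendsto (fun s : ℝ => c / (2 * s) + a * s) atTop atTop := by
    refine Tendsto.zero_eventuallyLE_add_atTop ?_ (tendsto_id.const_mul_atTop ha)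
    filter_upwards [eventually_gt_atTop 0] with s hs
    positivity
  refine squeeze_zero' (Eventually.of_forall fun s => mul_nonneg (exp_pos _).le (erfc_nonneg _))
    ?_ (tendsto_exp_sq_mul_erfc_atTop.comp hy)
  filter_upwards [eventually_gt_atTop 0] with s hs
  have hsq : c * a + a ^ 2 * s ^ 2 ≤ (c / (2 * s) + a * s) ^ 2 := by
    have : (c / (2 * s) + a * s) ^ 2 = (c / (2 * s)) ^ 2 + c * a + a ^ 2 * s ^ 2 := by
      field_simp
      ring
    nlinarith [sq_nonneg (c / (2 * s))]
  exact mul_le_mul_of_nonneg_right (exp_le_exp.mpr hsq) (erfc_nonneg _)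

lemma Rpa_eq_of_pos {D rr r0 α T : ℝ} (hD : 0 < D) (hT : 0 < T) :
    Rpa D rr r0 α T = (rr * α - 1) / (r0 * α) *
      (1 + erf ((rr - r0) / (2 * √(D * T))) -
        exp ((r0 - rr) * α + α ^ 2 * √(D * T) ^ 2) *
          erfc ((r0 - rr) / (2 * √(D * T)) + α * √(D * T))) := by
  have hsq : √(D * T) ^ 2 = D * T := sq_sqrt (mul_pos hD hT).le
  have h4 : √(4 * D * T) = 2 * √(D * T) := by
    rw [mul_assoc, sqrt_mul zero_le_four, show (4 : ℝ) = 2 ^ 2 by norm_num, sqrt_sq zero_le_two]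
  have harg : (r0 - rr + 2 * D * α * T) / (2 * √(D * T)) =
      (r0 - rr) / (2 * √(D * T)) + α * √(D * T) := by
    field_simp
    linear_combination (-2 * α) * hsq
  rw [Rpa, h4, harg, hsq]
  ring_nf

lemma tendsto_Rpa_atTop {D rr r0 α : ℝ} (hD : 0 < D) (hr : rr ≤ r0) (hα : 0 < α) :
    Tendsto (Rpa D rr r0 α) atTop (nhds ((rr * α - 1) / (r0 * α))) := by
  have hs : Tendsto (fun T => √(D * T)) atTop atTop :=
    tendsto_sqrt_atTop.comp (tendsto_id.const_mul_atTop hD)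
  have hlim : Tendsto (fun s : ℝ => (rr * α - 1) / (r0 * α) *
      (1 + erf ((rr - r0) / (2 * s)) - exp ((r0 - rr) * α + α ^ 2 * s ^ 2) *
        erfc ((r0 - rr) / (2 * s) + α * s))) atTop (nhds ((rr * α - 1) / (r0 * α))) := by
    simpa using (((tendsto_const_nhds (x := (1 : ℝ))).add (tendsto_erf_div_atTop (rr - r0)
      (tendsto_id.const_mul_atTop two_pos))).sub
        (tendsto_exp_mul_erfc_add_atTop (sub_nonneg.mpr hr) hα)).const_mul
          ((rr * α - 1) / (r0 * α))
  refine (hlim.comp hs).congr' ?_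
  filter_upwards [eventually_gt_atTop 0] with T hT
  exact (Rpa_eq_of_pos hD hT).symm

lemma partialAdsorption_limit_eq {D rr k1 : ℝ} (r0 : ℝ) (hD : D ≠ 0) (hrr : rr ≠ 0) :
    (rr * (k1 / D + 1 / rr) - 1) / (r0 * (k1 / D + 1 / rr)) =
      k1 * rr ^ 2 / (r0 * (k1 * rr + D)) := by
  field_simp
  ring

/-- (Proposition 1) The expected number of molecules adsorbed to the partial
adsorption receiver converges, as `T → ∞`, to `N_tx k₁ r_r²/(r₀(k₁ r_r + D))`. -/
theorem proposition1_partial_adsorption (D rr r0 k1 : ℝ)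
    (hD : 0 < D) (hrr : 0 < rr) (hr0 : rr < r0) (hk1 : 0 < k1)
    (α : ℝ) (hα : α = k1 / D + 1 / rr) (Ntx : ℕ) :
    Tendsto (fun T : ℝ => (Ntx : ℝ) * Rpa D rr r0 α T) atTop
      (nhds ((Ntx : ℝ) * k1 * rr ^ 2 / (r0 * (k1 * rr + D)))) := by
  have hαpos : 0 < α := by rw [hα]; positivity
  convert (tendsto_Rpa_atTop hD hr0.le hαpos).const_mul (Ntx : ℝ) using 2
  rw [hα, partialAdsorption_limit_eq r0 hD.ne' hrr.ne']
  ring
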